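/- The language L = { ā^{n₁} b̄^{m₁} s a^{n₂} b^{m₂} : n₁ ≥ n₂ ≥ 0, m₁ ≥ m₂ ≥ 0 } over the five-letter alphabet {ā, b̄, s, a, b} is not context-free. -/

import Mathlib

/-- The five-letter alphabet {ā, b̄, s, a, b}. -/
inductive Ab5 where
  | abar | bbar | sep | a | b
deriving DecidableEq

/-- The language { ā^{n₁} b̄^{m₁} s a^{n₂} b^{m₂} : n₁ ≥ n₂ ≥ 0, m₁ ≥ m₂ ≥ 0 }. -/
def L5 : Language Ab5 :=
  {w | ∃ n1 m1 n2 m2 : ℕ, n2 ≤ n1 ∧ m2 ≤ m1 ∧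
    w = List.replicate n1 Ab5.abar ++ List.replicate m1 Ab5.bbar ++ [Ab5.sep] ++
        List.replicate n2 Ab5.a ++ List.replicate m2 Ab5.b}

/-!
Via the pumping lemma. Work with parse trees whose leaves may be unexpanded nonterminals, let
`m` bound the lengths of right-hand sides and `K` the number of rules. In a tree of minimal size
whose yield is longer than `m ^ K`, descend along largest children to a subtree whose yield has
length in `(m ^ K, m ^ (K + 1)]`; continuing from there, a label repeats within `K + 1` steps,
which gives `A ⇒* v A x` and `A ⇒* w` with `|v w x| ≤ m ^ (K + 1)`, and minimality forces
`v x ≠ []`.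

For `L5` pump `ā^p b̄^p s a^p b^p`: since this word is tight for both inequalities, pumping down
and up forces `v x` to contain as many `ā` as `a` and as many `b̄` as `b`, while a window of
length at most `p` cannot contain both `ā` and `a`, nor both `b̄` and `b`.
-/

namespace ContextFreeGrammar

/-- Trees of partial derivations: a leaf may carry a nonterminal that is not expanded further. -/
inductive ParseTree (T N : Type*) where
  | leaf (x : Symbol T N)
  | node (A : N) (children : List (ParseTree T N))

namespace ParseTree

variable {T : Type*} {N : Type*}

def root : ParseTree T N → Symbol T N
  | leaf x => x
  | node A _ => .nonterminal A

def yield : ParseTree T N → List (Symbol T N)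
  | leaf x => [x]
  | node _ c => c.flatMap yield

def size : ParseTree T N → ℕ
  | leaf _ => 1
  | node _ c => (c.map size).sum + 1

inductive IsValid (g : ContextFreeGrammar T) : ParseTree T g.NT → Prop
  | leaf (x : Symbol T g.NT) : IsValid g (leaf x)
  | node (ρ : ContextFreeRule T g.NT) (hρ : ρ ∈ g.rules) (c : List (ParseTree T g.NT))
      (hroot : c.map root = ρ.output) (hc : ∀ s ∈ c, IsValid g s) : IsValid g (node ρ.input c)

/-- One-hole contexts: `cons A l k r` is a node labelled `A` whose children are `l`, then the
child containing the hole of `k`, then `r`. -/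
inductive Context (T N : Type*) where
  | hole
  | cons (A : N) (l : List (ParseTree T N)) (k : Context T N) (r : List (ParseTree T N))

namespace Context

def fill : Context T N → ParseTree T N → ParseTree T N
  | hole, s => s
  | cons A l k r, s => node A (l ++ k.fill s :: r)

def comp : Context T N → Context T N → Context T N
  | hole, k' => k'
  | cons A l k r, k' => cons A l (k.comp k') r

def left : Context T N → List (Symbol T N)
  | hole => []
  | cons _ l k _ => l.flatMap yield ++ k.left

def right : Context T N → List (Symbol T N)
  | hole => []
  | cons _ _ k r => k.right ++ r.flatMap yield

def size : Context T N → ℕ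
  | hole => 0
  | cons _ l k r => (l.map ParseTree.size).sum + k.size + (r.map ParseTree.size).sum + 1

variable {k k' : Context T N} {s s' : ParseTree T N}

theorem fill_comp : (k.comp k').fill s = k.fill (k'.fill s) := by
  induction k with
  | hole => rfl
  | cons A l k r ih => simp [comp, fill, ih]

theorem yield_fill : (k.fill s).yield = k.left ++ s.yield ++ k.right := by
  induction k with
  | hole => simp [fill, left, right]
  | cons A l k r ih => simp [fill, left, right, yield, ih]

theorem size_fill : (k.fill s).size = k.size + s.size := by
  induction k with
  | hole => simp [fill, size]
  | cons A l k r ih => simp [fill, size, ParseTree.size, ih]; omega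

theorem size_pos (hk : k ≠ hole) : 0 < k.size := by
  cases k with
  | hole => contradiction
  | cons => simp [size]

theorem root_fill_congr (k : Context T N) (h : s.root = s'.root) :
    (k.fill s).root = (k.fill s').root := by
  cases k with
  | hole => exact h
  | cons => rfl

variable {g : ContextFreeGrammar T} {k : Context T g.NT} {s s' : ParseTree T g.NT}

theorem isValid_of_isValid_fill (h : (k.fill s).IsValid g) : s.IsValid g := by
  induction k with
  | hole => exact h
  | cons A l k r ih =>
    cases h with
    | node _ _ _ _ hc => exact ih (hc _ (by simp))

theorem isValid_fill (h : (k.fill s).IsValid g) (hs' : s'.IsValid g) (hroot : s'.root = s.root) :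
    (k.fill s').IsValid g := by
  induction k with
  | hole => exact hs'
  | cons A l k r ih =>
    cases h with
    | node ρ hρ c hroots hc =>
      refine .node ρ hρ _ ?_ fun t ht => ?_
      · simpa [root_fill_congr k hroot] using hroots
      · simp only [List.mem_append, List.mem_cons] at ht
        rcases ht with ht | rfl | ht
        · exact hc t (by simp [ht])
        · exact ih (hc _ (by simp))
        · exact hc t (by simp [ht])

end Context

end ParseTree

open ParseTree

variable {T : Type*} {g : ContextFreeGrammar T}

theorem derives_flatMap {ι : Type*} {l : List ι} {u v : ι → List (Symbol T g.NT)}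
    (h : ∀ i ∈ l, g.Derives (u i) (v i)) : g.Derives (l.flatMap u) (l.flatMap v) := by
  induction l with
  | nil => exact .refl _
  | cons i l ih =>
    simp only [List.flatMap_cons]
    exact ((h i (by simp)).append_right _).trans
      ((ih fun j hj => h j (by simp [hj])).append_left _)

theorem Derives.append_sides {v w : List (Symbol T g.NT)} (h : g.Derives v w)
    (p q : List (Symbol T g.NT)) : g.Derives (p ++ v ++ q) (p ++ w ++ q) :=
  (h.append_left p).append_right q

theorem Derives.pump {A : g.NT} {v x : List (Symbol T g.NT)}
    (h : g.Derives [.nonterminal A] (v ++ [.nonterminal A] ++ x)) (k : ℕ) :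
    g.Derives [.nonterminal A]
      ((List.replicate k v).flatten ++ [.nonterminal A] ++ (List.replicate k x).flatten) := by
  induction k with
  | zero => simpa using .refl _
  | succ k ih =>
    rw [List.replicate_succ', List.replicate_succ]
    simpa using ih.trans (h.append_sides _ _)

theorem ParseTree.IsValid.derives {t : ParseTree T g.NT} (h : t.IsValid g) :
    g.Derives [t.root] t.yield := by
  induction h with
  | leaf x =>
    simp only [root, yield]
    exact .refl [x]
  | node ρ hρ c hroot _ ih =>
    have hc : g.Derives (c.map root) (c.flatMap yield) := by
      simpa [← List.map_eq_flatMap] using derives_flatMap ih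
    rw [hroot] at hc
    simp only [root, yield]
    exact Produces.trans_derives ⟨ρ, hρ, ContextFreeRule.Rewrites.input_output⟩ hc

theorem ParseTree.Context.derives_of_isValid_fill {k : Context T g.NT} {s : ParseTree T g.NT}
    (h : (k.fill s).IsValid g) : g.Derives [(k.fill s).root] (k.left ++ [s.root] ++ k.right) := by
  have hleaf : (k.fill (leaf s.root)).IsValid g := Context.isValid_fill h (.leaf _) rfl
  simpa [Context.root_fill_congr k (s := leaf s.root) (s' := s) rfl, Context.yield_fill, yield]
    using hleaf.derives

theorem exists_parseTrees_of_derives {u w : List (Symbol T g.NT)} (h : g.Derives u w) :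
    ∃ c : List (ParseTree T g.NT), c.map root = u ∧ c.flatMap yield = w ∧
      ∀ s ∈ c, s.IsValid g := by
  induction h using Relation.ReflTransGen.head_induction_on with
  | refl => exact ⟨w.map leaf, by simp [Function.comp_def, root],
      by induction w <;> simp_all [yield],
      by simp only [List.mem_map]; rintro _ ⟨x, -, rfl⟩; exact .leaf x⟩
  | head hprod _ ih =>
    obtain ⟨c, hroot, hyield, hvalid⟩ := ih
    obtain ⟨ρ, hρ, hrw⟩ := hprod
    obtain ⟨p, q, rfl, rfl⟩ := hrw.exists_parts
    obtain ⟨c₁, c₂₃, rfl, hc₁, hc₂₃⟩ :=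
      List.map_eq_append_iff.1 (hroot.trans (List.append_assoc ..))
    obtain ⟨c₂, c₃, rfl, hc₂, hc₃⟩ := List.map_eq_append_iff.1 hc₂₃
    refine ⟨c₁ ++ node ρ.input c₂ :: c₃, by simp [hc₁, hc₃, root], ?_, ?_⟩
    · simpa [yield] using hyield
    · intro s hs
      simp only [List.mem_append, List.mem_cons] at hs
      rcases hs with hs | rfl | hs
      · exact hvalid s (by simp [hs])
      · exact .node ρ hρ c₂ hc₂ fun s hs => hvalid s (by simp [hs])
      · exact hvalid s (by simp [hs])

theorem exists_parseTree_of_mem_language {z : List T} (hz : z ∈ g.language) :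
    ∃ t : ParseTree T g.NT, t.IsValid g ∧ t.root = .nonterminal g.initial ∧
      t.yield = z.map .terminal := by
  obtain ⟨c, hroot, hyield, hvalid⟩ :=
    exists_parseTrees_of_derives ((mem_language_iff g z).1 hz)
  obtain ⟨t, rfl, ht⟩ := List.map_eq_singleton_iff.1 hroot
  exact ⟨t, hvalid t (by simp), ht, by simpa using hyield⟩

def PumpingDecomposition (g : ContextFreeGrammar T) (p : ℕ) (B : Symbol T g.NT)
    (w : List (Symbol T g.NT)) : Prop :=
  ∃ (A : g.NT) (U V W X Y : List (Symbol T g.NT)), w = U ++ V ++ W ++ X ++ Y ∧ V ++ X ≠ [] ∧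
    (V ++ W ++ X).length ≤ p ∧ g.Derives [B] (U ++ [.nonterminal A] ++ Y) ∧
    g.Derives [.nonterminal A] (V ++ [.nonterminal A] ++ X) ∧ g.Derives [.nonterminal A] W

namespace ParseTree.IsValid

variable {m : ℕ} {t : ParseTree T g.NT}

theorem exists_mem_length_yield_le {A : g.NT} {c : List (ParseTree T g.NT)}
    (hv : (ParseTree.node A c).IsValid g) (hm : ∀ ρ ∈ g.rules, ρ.output.length ≤ m)
    (hc : c ≠ []) :
    ∃ s ∈ c, (ParseTree.node A c).yield.length ≤ m * s.yield.length := by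
  obtain ⟨s, hs⟩ := Option.ne_none_iff_exists'.1 <|
    (List.argmax_eq_none (f := fun t : ParseTree T g.NT => t.yield.length)).not.2 hc
  refine ⟨s, List.argmax_mem hs, ?_⟩
  have hlen : c.length ≤ m := by
    cases hv with
    | node ρ hρ _ hroot _ => simpa [← hroot] using hm ρ hρ
  calc (ParseTree.node A c).yield.length = (c.map fun t => t.yield.length).sum := by
        simp [yield, List.length_flatMap]
    _ ≤ c.length * s.yield.length := by
        simpa using List.sum_le_card_nsmul (c.map fun t => t.yield.length) s.yield.length
          (by simpa using fun t ht => List.le_of_mem_argmax ht hs)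
    _ ≤ m * s.yield.length := Nat.mul_le_mul_right _ hlen

theorem exists_fill_yield_window (hv : t.IsValid g) (hm : ∀ ρ ∈ g.rules, ρ.output.length ≤ m)
    (hm₀ : 0 < m) {n : ℕ} (hlen : m ^ n < t.yield.length) :
    ∃ (K : Context T g.NT) (s : ParseTree T g.NT), t = K.fill s ∧
      m ^ n < s.yield.length ∧ s.yield.length ≤ m ^ (n + 1) := by
  induction hv with
  | leaf x => simp [yield] at hlen; omega
  | node ρ hρ c hroot hvc ih =>
    by_cases hshort : (ParseTree.node ρ.input c).yield.length ≤ m ^ (n + 1)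
    · exact ⟨.hole, _, rfl, hlen, hshort⟩
    have hc : c ≠ [] := by rintro rfl; simp [yield] at hlen
    obtain ⟨s, hs, hsm⟩ := exists_mem_length_yield_le (.node ρ hρ c hroot hvc) hm hc
    have hmul : m * m ^ n < m * s.yield.length := by rw [pow_succ'] at hshort; omega
    obtain ⟨K, s', rfl, hs'⟩ := ih s hs (Nat.lt_of_mul_lt_mul_left hmul)
    obtain ⟨l, r, rfl⟩ := List.append_of_mem hs
    exact ⟨.cons ρ.input l K r, s', rfl, hs'⟩

/-- `S` stands for the labels already passed on the way down to `t`. -/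
theorem exists_fill_root_mem_or_nested_repeat (hv : t.IsValid g)
    (hm : ∀ ρ ∈ g.rules, ρ.output.length ≤ m) (hm₀ : 0 < m) {S : Finset g.NT}
    (hS : ∀ A ∈ S, ∃ ρ ∈ g.rules, ρ.input = A) {n : ℕ} (hcard : g.rules.card ≤ S.card + n)
    (hlen : m ^ n < t.yield.length) :
    (∃ (K : Context T g.NT) (s : ParseTree T g.NT), t = K.fill s ∧
      ∃ A ∈ S, s.root = .nonterminal A) ∨
    ∃ (K k : Context T g.NT) (s : ParseTree T g.NT) (A : g.NT), k ≠ .hole ∧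
      t = K.fill (k.fill s) ∧ (k.fill s).root = .nonterminal A ∧ s.root = .nonterminal A := by
  classical
  induction hv generalizing S n with
  | leaf x => simp [yield] at hlen; omega
  | node ρ hρ c hroot hvc ih =>
    by_cases hB : ρ.input ∈ S
    · exact .inl ⟨.hole, _, rfl, ρ.input, hB, rfl⟩
    have hS' : ∀ A ∈ insert ρ.input S, ∃ ρ ∈ g.rules, ρ.input = A := by
      simpa using ⟨⟨ρ, hρ, rfl⟩, hS⟩
    have hcard' : (insert ρ.input S).card ≤ g.rules.card :=
      Finset.card_le_card_of_surjOn ContextFreeRule.input fun A hA => by simpa using hS' A hA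
    rw [Finset.card_insert_of_notMem hB] at hcard'
    obtain _ | n := n
    · omega
    have hc : c ≠ [] := by rintro rfl; simp [yield] at hlen
    obtain ⟨s, hs, hsm⟩ := exists_mem_length_yield_le (.node ρ hρ c hroot hvc) hm hc
    have hmul : m * m ^ n < m * s.yield.length := by rw [pow_succ'] at hlen; omega
    obtain ⟨l, r, rfl⟩ := List.append_of_mem hs
    rcases ih s hs hS' (by rw [Finset.card_insert_of_notMem hB]; omega)
        (Nat.lt_of_mul_lt_mul_left hmul) with
      ⟨K, s', rfl, A, hA, hroot⟩ | ⟨K, k, s', A, hk, rfl, hroots⟩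
    · rcases Finset.mem_insert.1 hA with rfl | hA
      · exact .inr ⟨.hole, .cons _ l K r, s', _, nofun, rfl, rfl, hroot⟩
      · exact .inl ⟨.cons ρ.input l K r, s', rfl, A, hA, hroot⟩
    · exact .inr ⟨.cons ρ.input l K r, k, s', A, hk, rfl, hroots⟩

theorem pumpingDecomposition (hv : t.IsValid g) (hm : ∀ ρ ∈ g.rules, ρ.output.length ≤ m)
    (hm₀ : 0 < m) (hlen : m ^ g.rules.card < t.yield.length) :
    g.PumpingDecomposition (m ^ (g.rules.card + 1)) t.root t.yield := by
  induction hsize : t.size using Nat.strong_induction_on generalizing t with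
  | _ n ih =>
  obtain ⟨K₀, t₁, rfl, hlo, hhi⟩ := hv.exists_fill_yield_window hm hm₀ hlen
  rcases (Context.isValid_of_isValid_fill hv).exists_fill_root_mem_or_nested_repeat hm hm₀
      (S := ∅) (by simp) (by simp) hlo with
    ⟨-, -, -, A, hA, -⟩ | ⟨K₁, k, s, A, hk, rfl, hkA, hsA⟩
  · simp at hA
  rw [← Context.fill_comp] at hv hsize hlen ⊢
  generalize K₀.comp K₁ = K at hv hsize hlen ⊢
  have hvk := Context.isValid_of_isValid_fill hv
  have hvs := Context.isValid_of_isValid_fill hvk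
  by_cases hks : k.left ++ k.right = []
  · -- cutting out the part between the two occurrences of `A` keeps root and yield
    have hroot : s.root = (k.fill s).root := hsA.trans hkA.symm
    have hyield : (K.fill s).yield = (K.fill (k.fill s)).yield := by
      simp_all [Context.yield_fill]
    have hsmall : (K.fill s).size < n := by
      have := Context.size_pos hk
      simp only [← hsize, Context.size_fill]
      omega
    have := ih _ hsmall (Context.isValid_fill hv hvs hroot) (hyield ▸ hlen) rfl
    rwa [Context.root_fill_congr K hroot, hyield] at this
  · refine ⟨A, K.left, k.left, s.yield, k.right, K.right, by simp [Context.yield_fill], hks, ?_,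
      hkA ▸ Context.derives_of_isValid_fill hv,
      by simpa only [hkA, hsA] using Context.derives_of_isValid_fill hvk, hsA ▸ hvs.derives⟩
    simp only [Context.yield_fill, List.length_append] at hhi ⊢
    omega

end ParseTree.IsValid

theorem _root_.Language.IsContextFree.exists_pumping {L : Language T} (hL : L.IsContextFree) :
    ∃ p, ∀ z ∈ L, p < z.length → ∃ u v w x y : List T, z = u ++ v ++ w ++ x ++ y ∧
      v ++ x ≠ [] ∧ (v ++ w ++ x).length ≤ p ∧
      ∀ k : ℕ, u ++ (List.replicate k v).flatten ++ w ++ (List.replicate k x).flatten ++ y ∈ L := by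
  obtain ⟨g, rfl⟩ := hL
  set m := g.rules.sup (fun ρ => ρ.output.length) + 1
  have hm : ∀ ρ ∈ g.rules, ρ.output.length ≤ m := fun ρ hρ =>
    (Finset.le_sup (f := fun ρ => ρ.output.length) hρ).trans (Nat.le_succ _)
  refine ⟨m ^ (g.rules.card + 1), fun z hz hlong => ?_⟩
  obtain ⟨t, hv, hroot, hyield⟩ := exists_parseTree_of_mem_language hz
  have hdec := hv.pumpingDecomposition hm (Nat.succ_pos _) <| by
    rw [hyield, List.length_map]
    exact (Nat.pow_le_pow_right (Nat.succ_pos _) (Nat.le_succ _)).trans_lt hlong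
  rw [hroot, hyield] at hdec
  obtain ⟨A, U, V, W, X, Y, hsplit, hVX, hlen, hU, hV, hW⟩ := hdec
  obtain ⟨z₁, y, rfl, h₁, rfl⟩ := List.map_eq_append_iff.1 hsplit
  obtain ⟨z₂, x, rfl, h₂, rfl⟩ := List.map_eq_append_iff.1 h₁
  obtain ⟨z₃, w, rfl, h₃, rfl⟩ := List.map_eq_append_iff.1 h₂
  obtain ⟨u, v, rfl, rfl, rfl⟩ := List.map_eq_append_iff.1 h₃
  refine ⟨u, v, w, x, y, rfl, by simpa using hVX, by simpa using hlen, fun k => ?_⟩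
  rw [mem_language_iff]
  simpa [List.map_flatten, List.map_replicate] using
    hU.trans (((hV.pump k).trans (hW.append_sides _ _)).append_sides _ _)

end ContextFreeGrammar

theorem List.IsInfix.length_le_of_mem_of_mem {α : Type*} {W P M Q : List α} {c d : α}
    (h : W <:+: P ++ M ++ Q) (hc : c ∈ W) (hc' : c ∉ M ++ Q) (hd : d ∈ W) (hd' : d ∉ P ++ M) :
    M.length ≤ W.length := by
  obtain ⟨u, y, h⟩ := h
  simp only [List.append_assoc] at h
  rcases List.append_eq_append_iff.1 h with ⟨a, rfl, hWy⟩ | ⟨b, rfl, hMQ⟩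
  · rw [← List.append_assoc] at hWy
    rcases List.append_eq_append_iff.1 hWy with ⟨e, he, -⟩ | ⟨e, rfl, -⟩
    · have : d ∈ a ++ M := he ▸ List.mem_append_left e hd
      simp_all
    · simp only [List.length_append]
      omega
  · have : c ∈ M ++ Q := hMQ ▸ by simp [hc]
    contradiction

def balancedWord (p : ℕ) : List Ab5 :=
  List.replicate p .abar ++ List.replicate p .bbar ++ [.sep] ++
    List.replicate p .a ++ List.replicate p .b

theorem balancedWord_mem_L5 (p : ℕ) : balancedWord p ∈ L5 :=
  ⟨p, p, p, p, le_rfl, le_rfl, rfl⟩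

theorem count_le_count_of_mem_L5 {w : List Ab5} (h : w ∈ L5) :
    w.count .sep = 1 ∧ w.count .a ≤ w.count .abar ∧ w.count .b ≤ w.count .bbar := by
  obtain ⟨n₁, m₁, n₂, m₂, hn, hm, rfl⟩ := h
  simp [List.count_replicate]
  omega

theorem not_mem_and_mem_of_isInfix_balancedWord {p : ℕ} {W : List Ab5}
    (hW : W <:+: balancedWord p) (hlen : W.length ≤ p) :
    ¬ (Ab5.abar ∈ W ∧ Ab5.a ∈ W) ∧ ¬ (Ab5.bbar ∈ W ∧ Ab5.b ∈ W) := by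
  constructor
  · rintro ⟨hc, hd⟩
    have hsplit : balancedWord p = List.replicate p .abar ++ (List.replicate p .bbar ++ [.sep]) ++
        (List.replicate p .a ++ List.replicate p .b) := by simp [balancedWord]
    have := (hsplit ▸ hW).length_le_of_mem_of_mem hc (by simp) hd (by simp)
    simp at this
    omega
  · rintro ⟨hc, hd⟩
    have hsplit : balancedWord p = (List.replicate p .abar ++ List.replicate p .bbar) ++
        ([.sep] ++ List.replicate p .a) ++ List.replicate p .b := by simp [balancedWord]
    have := (hsplit ▸ hW).length_le_of_mem_of_mem hc (by simp) hd (by simp)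
    simp at this
    omega

theorem count_eq_of_pump_mem_L5 {p : ℕ} {u v w x y : List Ab5}
    (hz : balancedWord p = u ++ v ++ w ++ x ++ y)
    (hpump : ∀ k : ℕ,
      u ++ (List.replicate k v).flatten ++ w ++ (List.replicate k x).flatten ++ y ∈ L5) :
    (v ++ x).count .sep = 0 ∧ (v ++ x).count .abar = (v ++ x).count .a ∧
      (v ++ x).count .bbar = (v ++ x).count .b := by
  have h₀ := count_le_count_of_mem_L5 (by simpa using hpump 0)
  have h₂ := count_le_count_of_mem_L5 (hpump 2)
  have hcount (c : Ab5) : (balancedWord p).count c = (u ++ v ++ w ++ x ++ y).count c := by rw [hz]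
  have := hcount .sep; have := hcount .abar; have := hcount .a; have := hcount .bbar
  have := hcount .b
  simp [balancedWord, List.count_replicate] at *
  omega

/-- `L5` is not context-free. -/
theorem L5_not_contextFree : ¬ L5.IsContextFree := by
  intro hL
  obtain ⟨p, hp⟩ := hL.exists_pumping
  obtain ⟨u, v, w, x, y, hz, hvx, hlen, hpump⟩ :=
    hp _ (balancedWord_mem_L5 p) (by simp [balancedWord])
  obtain ⟨hsep, habar, hbbar⟩ := count_eq_of_pump_mem_L5 hz hpump
  have hwindow := not_mem_and_mem_of_isInfix_balancedWord ⟨u, y, by simp [hz]⟩ hlen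
  have hwin (c : Ab5) (hc : 0 < (v ++ x).count c) : c ∈ v ++ w ++ x := by
    have := List.count_pos_iff.1 hc
    simp only [List.mem_append] at this ⊢
    tauto
  obtain ⟨c, hc⟩ := List.exists_mem_of_ne_nil _ hvx
  have hc := List.count_pos_iff.2 hc
  cases c with
  | sep => omega
  | abar | a => exact hwindow.1 ⟨hwin _ (by omega), hwin _ (by omega)⟩
  | bbar | b => exact hwindow.2 ⟨hwin _ (by omega), hwin _ (by omega)⟩
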